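/- arXiv:math/0511537 — 3 statements merged into one kernel-verified Lean document; each statement's English description precedes it below -/
import Mathlib

section
/- (Two-row Pieri-type multiplicity-freeness.) If μ = (g, g) is a two-row rectangle and λ is a partition with at most two distinct part sizes (a rectangle or a fat hook), then for every partition ν, c^ν_{λ,(g,g)} ≤ 1. -/
/-- `f` is a partition: weakly decreasing and eventually zero (0-indexed parts). -/
def IsPartition (f : ℕ → ℕ) : Prop :=
  (∀ i j, i ≤ j → f j ≤ f i) ∧ ∃ N, ∀ i, N ≤ i → f i = 0

/-- The partition `f` is contained in the `l × k` rectangle. -/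
def InRect (f : ℕ → ℕ) (l k : ℕ) : Prop :=
  IsPartition f ∧ f 0 ≤ k ∧ ∀ i, l ≤ i → f i = 0

/-- Number of nonzero parts of `f`. -/
noncomputable def numParts (f : ℕ → ℕ) : ℕ := {i | f i ≠ 0}.ncard

/-- Number of distinct nonzero part sizes of `f`. -/
noncomputable def numPartSizes (f : ℕ → ℕ) : ℕ := {n | n ≠ 0 ∧ ∃ i, f i = n}.ncard

/-- The cell `c = (i,j)` (0-indexed) lies in the skew shape `ν/λ`. -/
def InSkew (ν lam : ℕ → ℕ) (c : ℕ × ℕ) : Prop := lam c.1 ≤ c.2 ∧ c.2 < ν c.1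

/-- `c'` strictly precedes `c` in the right-to-left, top-to-bottom reading order. -/
def ReadBefore (c' c : ℕ × ℕ) : Prop := c'.1 < c.1 ∨ (c'.1 = c.1 ∧ c.2 < c'.2)

/-- `T` is a Littlewood–Richardson filling of the skew shape `ν/λ` with content `μ`:
a semistandard filling (positive entries, rows weakly increasing, columns strictly
increasing) whose entry `m+1` occurs `μ m` times, and whose right-to-left,
top-to-bottom reading word is a ballot sequence. -/
def IsLRFilling (lam mu ν : ℕ → ℕ) (T : ℕ × ℕ → ℕ) : Prop :=
  (∀ c, ¬ InSkew ν lam c → T c = 0) ∧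
  (∀ c, InSkew ν lam c → 1 ≤ T c) ∧
  (∀ i j j', InSkew ν lam (i, j) → InSkew ν lam (i, j') → j ≤ j' →
      T (i, j) ≤ T (i, j')) ∧
  (∀ i j, InSkew ν lam (i, j) → InSkew ν lam (i + 1, j) → T (i, j) < T (i + 1, j)) ∧
  (∀ m, {c | InSkew ν lam c ∧ T c = m + 1}.Finite ∧
      {c | InSkew ν lam c ∧ T c = m + 1}.ncard = mu m) ∧
  (∀ c, InSkew ν lam c → ∀ m, 1 ≤ m →
      {c' | InSkew ν lam c' ∧ (ReadBefore c' c ∨ c' = c) ∧ T c' = m + 1}.ncard ≤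
      {c' | InSkew ν lam c' ∧ (ReadBefore c' c ∨ c' = c) ∧ T c' = m}.ncard)

/-- The Littlewood–Richardson coefficient `c^ν_{λ,μ}`. -/
noncomputable def lrCoeff (lam mu ν : ℕ → ℕ) : ℕ :=
  Nat.card {T : ℕ × ℕ → ℕ // IsLRFilling lam mu ν T}

/-- Box `c = (i,j)` of the rectangle lies in `λ` placed at the top-left. -/
def InLam (lam : ℕ → ℕ) (c : ℕ × ℕ) : Prop := c.2 < lam c.1

/-- Box `c = (i,j)` of `l × k` lies in `rotate(μ)`, i.e. `μ` rotated 180° and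
placed at the bottom-right. -/
def InRot (mu : ℕ → ℕ) (l k : ℕ) (c : ℕ × ℕ) : Prop := k - mu (l - 1 - c.1) ≤ c.2

/-- The placements of `λ` (top-left) and `rotate(μ)` (bottom-right) in `l × k`
are disjoint. -/
def DisjointPlace (lam mu : ℕ → ℕ) (l k : ℕ) : Prop :=
  ∀ c : ℕ × ℕ, c.1 < l → c.2 < k → ¬ (InLam lam c ∧ InRot mu l k c)

/-- Column `j` of `l × k` is full for `λ ∪ rotate(μ)`. -/
def FullCol (lam mu : ℕ → ℕ) (l k j : ℕ) : Prop :=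
  ∀ i, i < l → (InLam lam (i, j) ∨ InRot mu l k (i, j))

/-- Row `i` of `l × k` is full for `λ ∪ rotate(μ)`. -/
def FullRow (lam mu : ℕ → ℕ) (l k i : ℕ) : Prop :=
  ∀ j, j < k → (InLam lam (i, j) ∨ InRot mu l k (i, j))

/-- `(λ, μ, l × k)` is a basic Richardson quadruple. -/
def BasicRQ (lam mu : ℕ → ℕ) (l k : ℕ) : Prop :=
  InRect lam l k ∧ InRect mu l k ∧ DisjointPlace lam mu l k ∧
  (∀ j, j < k → ¬ FullCol lam mu l k j) ∧ (∀ i, i < l → ¬ FullRow lam mu l k i)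

/-- The rectangle partition `(g^h)`. -/
def rectP (g h : ℕ) : ℕ → ℕ := fun i => if i < h then g else 0

/-- The hook partition `(b, 1^a)`. -/
def hookP (b a : ℕ) : ℕ → ℕ := fun i => if i = 0 then b else if i ≤ a then 1 else 0

/-!
An LR filling of `ν/λ` with content `(g, g)` has only the entries 1 and 2, and each of its rows
is a run of 1s followed by a run of 2s; so it is determined by the numbers `t i` of 2s in the
rows. A 1 in row `i + 1` lies below a cell of `λ`, so 1s occur only in row 0 and in the rows just
below the corners of `λ`: for a rectangle or a fat hook, the row `c` below the inner corner and the
row `e = ℓ(λ)`. In every other row the 2s fill the whole row of `ν/λ`. Below row `e` there are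
only 2s, `ν (e + 1)` of them, so the ballot condition up to row `e` leaves at most `ν (e + 1)` 1s
in row `e`, while a 2 in row `e` must not lie above a cell of row `e + 1`: hence
`t e = ν e - ν (e + 1)`. Finally `t c` is fixed by the total number `g` of 2s.
-/

open Finset

theorem Finset.eq_Ico_card_sub_of_upward_closed {S : Finset ℕ} {b : ℕ} (hlt : ∀ j ∈ S, j < b)
    (hup : ∀ j ∈ S, ∀ j', j ≤ j' → j' < b → j' ∈ S) : S = Ico (b - #S) b := by
  rcases S.eq_empty_or_nonempty with rfl | hne
  · simp
  have hS : S = Ico (S.min' hne) b := by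
    ext j
    rw [mem_Ico]
    exact ⟨fun hj => ⟨S.min'_le j hj, hlt j hj⟩,
      fun ⟨h₁, h₂⟩ => hup _ (S.min'_mem hne) j h₁ h₂⟩
  have hmin := hlt _ (S.min'_mem hne)
  rw [hS, Nat.card_Ico, Nat.sub_sub_self hmin.le]

theorem ncard_eq_sum_card_rows {P : ℕ × ℕ → Prop} (F : ℕ → Finset ℕ) (N : ℕ)
    (hP : ∀ i j, P (i, j) ↔ i < N ∧ j ∈ F i) :
    {c | P c}.ncard = ∑ i ∈ range N, #(F i) := by
  have hset : {c | P c} = Equiv.sigmaEquivProd ℕ ℕ '' ↑((range N).sigma F) := by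
    ext ⟨i, j⟩
    simp [hP]
  rw [hset, Set.ncard_image_of_injective _ (Equiv.injective _), Set.ncard_coe_finset,
    card_sigma]

/-- Row counts of an LR filling of `ν/λ` with content `(g, g)`: `t i` and `u i` are the numbers
of 2s and of 1s in row `i`. -/
structure IsLRRowCounts (g : ℕ) (lam ν t u : ℕ → ℕ) : Prop where
  add_eq : ∀ i, t i + u i = ν i - lam i
  ones_succ_le : ∀ i, u (i + 1) ≤ lam i - lam (i + 1)
  twos_le : ∀ i, t i ≤ ν i - ν (i + 1)
  sum_twos : ∀ N, (∀ i, N ≤ i → ν i = 0) → ∑ i ∈ range N, t i = g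
  sum_ones : ∀ N, (∀ i, N ≤ i → ν i = 0) → ∑ i ∈ range N, u i = g
  ballot : ∀ k, 0 < t k → ∑ i ∈ range (k + 1), t i ≤ ∑ i ∈ range k, u i

namespace IsLRRowCounts

variable {g : ℕ} {lam ν t u t' u' : ℕ → ℕ}

theorem sum_twos_le_sum_ones (h : IsLRRowCounts g lam ν t u) (n : ℕ) :
    ∑ i ∈ range (n + 1), t i ≤ ∑ i ∈ range n, u i := by
  induction n with
  | zero =>
    rcases (t 0).eq_zero_or_pos with h₀ | h₀
    · simp [h₀]
    · exact h.ballot 0 h₀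
  | succ n ih =>
    rcases (t (n + 1)).eq_zero_or_pos with h₀ | h₀
    · rw [sum_range_succ t (n + 1), h₀, add_zero, sum_range_succ u n]
      exact ih.trans (Nat.le_add_right _ _)
    · exact h.ballot _ h₀

theorem twos_zero (h : IsLRRowCounts g lam ν t u) : t 0 = 0 := by
  simpa using h.sum_twos_le_sum_ones 0

theorem twos_succ_of_lam_eq (h : IsLRRowCounts g lam ν t u) {i : ℕ}
    (hi : lam (i + 1) = lam i) : t (i + 1) = ν (i + 1) - lam (i + 1) := by
  have := h.ones_succ_le i
  have := h.add_eq (i + 1)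
  omega

theorem twos_of_lam_eq_zero (h : IsLRRowCounts g lam ν t u) (hν : IsPartition ν) {e : ℕ}
    (he : lam e = 0) (he' : lam (e + 1) = 0) : t e = ν e - ν (e + 1) := by
  have hu : u (e + 1) = 0 := by
    have := h.ones_succ_le e
    omega
  have ht : t (e + 1) = ν (e + 1) := by
    have := h.add_eq (e + 1)
    omega
  have hνz : ∀ i, e + 2 ≤ i → ν i = 0 := by
    intro i hi
    have : t (e + 1) ≤ ν (e + 1) - ν (e + 2) := h.twos_le (e + 1)
    have := hν.1 (e + 1) (e + 2) (by omega)
    have := hν.1 (e + 2) i hi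
    omega
  have hsum_t := h.sum_twos _ hνz
  have hsum_u := h.sum_ones _ hνz
  rw [sum_range_succ, sum_range_succ] at hsum_t hsum_u
  have hballot := h.sum_twos_le_sum_ones e
  rw [sum_range_succ] at hballot
  have := h.add_eq e
  have := h.twos_le e
  omega

theorem twos_eq_of_forall_ne (h : IsLRRowCounts g lam ν t u) (h' : IsLRRowCounts g lam ν t' u')
    (hν : IsPartition ν) {c : ℕ} (hne : ∀ i, i ≠ c → t i = t' i) : t c = t' c := by
  obtain ⟨N, hN⟩ := hν.2
  have hνz : ∀ i, max N (c + 1) ≤ i → ν i = 0 := fun i hi => hN i (le_of_max_le_left hi)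
  have hsum := (h.sum_twos _ hνz).trans (h'.sum_twos _ hνz).symm
  have hc : c ∈ range (max N (c + 1)) := mem_range.2 (by omega)
  rw [← add_sum_erase _ _ hc, ← add_sum_erase _ _ hc,
    sum_congr rfl fun i hi => hne i (ne_of_mem_erase hi)] at hsum
  exact Nat.add_right_cancel hsum

theorem twos_unique (h : IsLRRowCounts g lam ν t u) (h' : IsLRRowCounts g lam ν t' u')
    (hlam : IsPartition lam) (hν : IsPartition ν) {c e : ℕ} (he : lam e = 0)
    (hcorner : ∀ i, lam (i + 1) < lam i → i + 1 = c ∨ i + 1 = e) : t = t' := by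
  have hne : ∀ i, i ≠ c → t i = t' i := by
    rintro (_ | i) hic
    · rw [h.twos_zero, h'.twos_zero]
    by_cases hie : i + 1 = e
    · have he' : lam (e + 1) = 0 := Nat.eq_zero_of_le_zero (he ▸ hlam.1 e (e + 1) e.le_succ)
      subst hie
      rw [h.twos_of_lam_eq_zero hν he he', h'.twos_of_lam_eq_zero hν he he']
    · have hi : lam (i + 1) = lam i :=
        (hlam.1 i (i + 1) i.le_succ).antisymm
          (not_lt.1 fun hlt => (hcorner i hlt).elim hic hie)
      rw [h.twos_succ_of_lam_eq hi, h'.twos_succ_of_lam_eq hi]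
  funext i
  by_cases hic : i = c
  · exact hic ▸ h.twos_eq_of_forall_ne h' hν hne
  · exact hne i hic

end IsLRRowCounts

namespace IsPartition

variable {lam : ℕ → ℕ}

theorem three_le_numPartSizes (hlam : IsPartition lam) {i j k : ℕ} (hij : lam j < lam i)
    (hjk : lam k < lam j) (hk : 0 < lam k) : 3 ≤ numPartSizes lam := by
  have hfin : {n | n ≠ 0 ∧ ∃ i, lam i = n}.Finite :=
    (Set.finite_Iic (lam 0)).subset fun n ⟨_, i, hi⟩ => hi ▸ hlam.1 0 i i.zero_le
  have hsub : ({lam i, lam j, lam k} : Set ℕ) ⊆ {n | n ≠ 0 ∧ ∃ i, lam i = n} := by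
    rintro n (rfl | rfl | rfl)
    exacts [⟨by omega, i, rfl⟩, ⟨by omega, j, rfl⟩, ⟨by omega, k, rfl⟩]
  calc 3 = ({lam i, lam j, lam k} : Set ℕ).ncard :=
        (Set.ncard_eq_three.2 ⟨_, _, _, by omega, by omega, by omega, rfl⟩).symm
    _ ≤ numPartSizes lam := Set.ncard_le_ncard hsub hfin

theorem exists_corners_of_numPartSizes_le_two (hlam : IsPartition lam)
    (hsize : numPartSizes lam ≤ 2) :
    ∃ c e, lam e = 0 ∧ ∀ i, lam (i + 1) < lam i → i + 1 = c ∨ i + 1 = e := by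
  classical
  have hex : ∃ n, lam n = 0 := let ⟨N, hN⟩ := hlam.2; ⟨N, hN N le_rfl⟩
  have he : lam (Nat.find hex) = 0 := Nat.find_spec hex
  have hpos : ∀ i, i < Nat.find hex → 0 < lam i :=
    fun i hi => Nat.pos_of_ne_zero (Nat.find_min hex hi)
  have hle : ∀ i, lam (i + 1) < lam i → i + 1 ≤ Nat.find hex := by
    intro i hi
    by_contra hlt
    have := hlam.1 (Nat.find hex) i (by omega)
    omega
  have hunique : ∀ i j, lam (i + 1) < lam i → lam (j + 1) < lam j → i < j →
      j + 1 < Nat.find hex → False := fun i j hi hj hij hje => by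
    have := hlam.three_le_numPartSizes ((hlam.1 (i + 1) j hij).trans_lt hi) hj (hpos _ hje)
    omega
  by_cases hc : ∃ j, j + 1 < Nat.find hex ∧ lam (j + 1) < lam j
  · obtain ⟨j, hje, hj⟩ := hc
    refine ⟨j + 1, Nat.find hex, he, fun i hi => ?_⟩
    rcases (hle i hi).lt_or_eq with hie | hie
    · rcases lt_trichotomy i j with hij | rfl | hji
      · exact (hunique i j hi hj hij hje).elim
      · exact Or.inl rfl
      · exact (hunique j i hj hi hji hie).elim
    · exact Or.inr hie
  · refine ⟨0, Nat.find hex, he, fun i hi => Or.inr ?_⟩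
    exact (hle i hi).eq_of_not_lt fun hie => hc ⟨i, hie, hi⟩

end IsPartition

def rowCells (lam ν : ℕ → ℕ) (T : ℕ × ℕ → ℕ) (v i : ℕ) : Finset ℕ :=
  (Ico (lam i) (ν i)).filter fun j => T (i, j) = v

theorem mem_rowCells {lam ν : ℕ → ℕ} {T : ℕ × ℕ → ℕ} {v i j : ℕ} :
    j ∈ rowCells lam ν T v i ↔ InSkew ν lam (i, j) ∧ T (i, j) = v := by
  simp [rowCells, InSkew, and_assoc]

theorem ncard_inSkew_eq_sum_card_rowCells {lam ν : ℕ → ℕ} (T : ℕ × ℕ → ℕ) (v : ℕ) {N : ℕ}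
    (hN : ∀ i, N ≤ i → ν i = 0) :
    {c | InSkew ν lam c ∧ T c = v}.ncard = ∑ i ∈ range N, #(rowCells lam ν T v i) := by
  refine ncard_eq_sum_card_rows _ N fun i j => ⟨fun h => ⟨?_, mem_rowCells.2 h⟩,
    fun h => mem_rowCells.1 h.2⟩
  by_contra hi
  have := h.1.2
  rw [hN i (by omega)] at this
  omega

namespace IsLRFilling

variable {g : ℕ} {lam ν : ℕ → ℕ} {T : ℕ × ℕ → ℕ}

theorem le_two (hT : IsLRFilling lam (rectP g 2) ν T) {c : ℕ × ℕ} (hc : InSkew ν lam c) :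
    T c ≤ 2 := by
  by_contra! h
  obtain ⟨hfin, hcard⟩ := hT.2.2.2.2.1 (T c - 1)
  have hzero : rectP g 2 (T c - 1) = 0 := if_neg (by omega)
  have hmem : c ∈ {c' | InSkew ν lam c' ∧ T c' = T c - 1 + 1} := ⟨hc, by omega⟩
  rw [(Set.ncard_eq_zero hfin).1 (hcard.trans hzero)] at hmem
  exact hmem

theorem eq_one_or_eq_two (hT : IsLRFilling lam (rectP g 2) ν T) {c : ℕ × ℕ}
    (hc : InSkew ν lam c) : T c = 1 ∨ T c = 2 := by
  have := hT.2.1 c hc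
  have := hT.le_two hc
  omega

theorem card_rowCells_two_add_one (hT : IsLRFilling lam (rectP g 2) ν T) (i : ℕ) :
    #(rowCells lam ν T 2 i) + #(rowCells lam ν T 1 i) = ν i - lam i := by
  have hone : rowCells lam ν T 1 i = (Ico (lam i) (ν i)).filter fun j => ¬ T (i, j) = 2 := by
    refine filter_congr fun j hj => ?_
    have := hT.eq_one_or_eq_two (c := (i, j)) (mem_Ico.1 hj)
    omega
  rw [hone, rowCells, card_filter_add_card_filter_not, Nat.card_Ico]

theorem rowCells_two_eq_Ico (hT : IsLRFilling lam (rectP g 2) ν T) (i : ℕ) :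
    rowCells lam ν T 2 i = Ico (ν i - #(rowCells lam ν T 2 i)) (ν i) := by
  refine eq_Ico_card_sub_of_upward_closed (fun j hj => (mem_rowCells.1 hj).1.2) ?_
  intro j hj j' hjj' hj'
  obtain ⟨hc, h2⟩ := mem_rowCells.1 hj
  have hc' : InSkew ν lam (i, j') := ⟨hc.1.trans hjj', hj'⟩
  have := hT.2.2.1 i j j' hc hc' hjj'
  have := hT.le_two hc'
  exact mem_rowCells.2 ⟨hc', by omega⟩

theorem eq_two_iff (hT : IsLRFilling lam (rectP g 2) ν T) {i j : ℕ}
    (hc : InSkew ν lam (i, j)) : T (i, j) = 2 ↔ ν i - #(rowCells lam ν T 2 i) ≤ j := by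
  calc T (i, j) = 2 ↔ j ∈ rowCells lam ν T 2 i := ⟨fun h => mem_rowCells.2 ⟨hc, h⟩,
        fun h => (mem_rowCells.1 h).2⟩
    _ ↔ j ∈ Ico (ν i - #(rowCells lam ν T 2 i)) (ν i) := by rw [← hT.rowCells_two_eq_Ico]
    _ ↔ ν i - #(rowCells lam ν T 2 i) ≤ j := by simp [hc.2]

theorem card_rowCells_two_le (hT : IsLRFilling lam (rectP g 2) ν T) (hlam : IsPartition lam)
    (i : ℕ) : #(rowCells lam ν T 2 i) ≤ ν i - ν (i + 1) := by
  rw [← Nat.card_Ico]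
  refine card_le_card fun j hj => ?_
  obtain ⟨hc, h2⟩ := mem_rowCells.1 hj
  refine mem_Ico.2 ⟨not_lt.1 fun hj' => ?_, hc.2⟩
  have hc' : InSkew ν lam (i + 1, j) := ⟨(hlam.1 i (i + 1) i.le_succ).trans hc.1, hj'⟩
  have := hT.2.2.2.1 i j hc hc'
  have := hT.le_two hc'
  omega

theorem card_rowCells_one_succ_le (hT : IsLRFilling lam (rectP g 2) ν T) (hν : IsPartition ν)
    (i : ℕ) : #(rowCells lam ν T 1 (i + 1)) ≤ lam i - lam (i + 1) := by
  rw [← Nat.card_Ico]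
  refine card_le_card fun j hj => ?_
  obtain ⟨hc', h1⟩ := mem_rowCells.1 hj
  refine mem_Ico.2 ⟨hc'.1, not_le.1 fun hj' => ?_⟩
  have hc : InSkew ν lam (i, j) := ⟨hj', hc'.2.trans_le (hν.1 i (i + 1) i.le_succ)⟩
  have := hT.2.2.2.1 i j hc hc'
  have := hT.2.1 _ hc
  omega

theorem sum_card_rowCells (hT : IsLRFilling lam (rectP g 2) ν T) {N : ℕ}
    (hN : ∀ i, N ≤ i → ν i = 0) {m : ℕ} (hm : m < 2) :
    ∑ i ∈ range N, #(rowCells lam ν T (m + 1) i) = g := by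
  rw [← ncard_inSkew_eq_sum_card_rowCells T _ hN, (hT.2.2.2.2.1 m).2]
  exact if_pos hm

/-- The ballot condition read at the leftmost 2 of row `k`. -/
theorem sum_card_rowCells_two_le (hT : IsLRFilling lam (rectP g 2) ν T) {k : ℕ}
    (hk : 0 < #(rowCells lam ν T 2 k)) :
    ∑ i ∈ range (k + 1), #(rowCells lam ν T 2 i) ≤ ∑ i ∈ range k, #(rowCells lam ν T 1 i) := by
  set j₀ := ν k - #(rowCells lam ν T 2 k)
  have hc₀ : InSkew ν lam (k, j₀) := by
    have := hT.card_rowCells_two_add_one k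
    exact ⟨by dsimp only; omega, by dsimp only; omega⟩
  have hread : ∀ i j, ReadBefore (i, j) (k, j₀) ∨ (i, j) = (k, j₀) ↔ i < k ∨ i = k ∧ j₀ ≤ j := by
    intro i j
    simp only [ReadBefore, Prod.mk.injEq]
    omega
  have htwos : ∀ i j, (InSkew ν lam (i, j) ∧ (ReadBefore (i, j) (k, j₀) ∨ (i, j) = (k, j₀)) ∧
      T (i, j) = 2) ↔ i < k + 1 ∧ j ∈ rowCells lam ν T 2 i := by
    intro i j
    rw [hread, mem_rowCells]
    constructor
    · rintro ⟨hc, hik, h2⟩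
      exact ⟨by omega, hc, h2⟩
    · rintro ⟨hik, hc, h2⟩
      rcases (Nat.lt_succ_iff.1 hik).lt_or_eq with hik | rfl
      · exact ⟨hc, Or.inl hik, h2⟩
      · exact ⟨hc, Or.inr ⟨rfl, (hT.eq_two_iff hc).1 h2⟩, h2⟩
  have hones : ∀ i j, (InSkew ν lam (i, j) ∧ (ReadBefore (i, j) (k, j₀) ∨ (i, j) = (k, j₀)) ∧
      T (i, j) = 1) ↔ i < k ∧ j ∈ rowCells lam ν T 1 i := by
    intro i j
    rw [hread, mem_rowCells]
    constructor
    · rintro ⟨hc, hik | ⟨rfl, hj⟩, h1⟩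
      · exact ⟨hik, hc, h1⟩
      · have := (hT.eq_two_iff hc).2 hj
        omega
    · rintro ⟨hik, hc, h1⟩
      exact ⟨hc, Or.inl hik, h1⟩
  have := hT.2.2.2.2.2 (k, j₀) hc₀ 1 le_rfl
  rwa [ncard_eq_sum_card_rows _ _ htwos, ncard_eq_sum_card_rows _ _ hones] at this

theorem eq_of_card_rowCells_two_eq {T' : ℕ × ℕ → ℕ} (hT : IsLRFilling lam (rectP g 2) ν T)
    (hT' : IsLRFilling lam (rectP g 2) ν T')
    (h : ∀ i, #(rowCells lam ν T 2 i) = #(rowCells lam ν T' 2 i)) : T = T' := by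
  funext ⟨i, j⟩
  by_cases hc : InSkew ν lam (i, j)
  · have h2 : T (i, j) = 2 ↔ T' (i, j) = 2 := by rw [hT.eq_two_iff hc, hT'.eq_two_iff hc, h]
    have := hT.eq_one_or_eq_two hc
    have := hT'.eq_one_or_eq_two hc
    omega
  · rw [hT.1 _ hc, hT'.1 _ hc]

theorem isLRRowCounts (hT : IsLRFilling lam (rectP g 2) ν T) (hlam : IsPartition lam)
    (hν : IsPartition ν) :
    IsLRRowCounts g lam ν (fun i => #(rowCells lam ν T 2 i)) (fun i => #(rowCells lam ν T 1 i))
    where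
  add_eq := hT.card_rowCells_two_add_one
  ones_succ_le := hT.card_rowCells_one_succ_le hν
  twos_le := hT.card_rowCells_two_le hlam
  sum_twos _ hN := hT.sum_card_rowCells hN (m := 1) one_lt_two
  sum_ones _ hN := hT.sum_card_rowCells hN (m := 0) two_pos
  ballot _ := hT.sum_card_rowCells_two_le

end IsLRFilling

/-- If `μ = (g, g)` is a two-row rectangle and `λ` has at most two distinct part
sizes, then every LR coefficient `c^ν_{λ,μ}` is at most 1. -/
theorem stmt16 (g : ℕ) (lam : ℕ → ℕ)
    (hlam : IsPartition lam) (hsize : numPartSizes lam ≤ 2) :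
    ∀ ν : ℕ → ℕ, IsPartition ν → lrCoeff lam (rectP g 2) ν ≤ 1 := by
  intro ν hν
  obtain ⟨c, e, he, hcorner⟩ := hlam.exists_corners_of_numPartSizes_le_two hsize
  have : Subsingleton {T // IsLRFilling lam (rectP g 2) ν T} := by
    refine ⟨fun ⟨T, hT⟩ ⟨T', hT'⟩ => Subtype.ext ?_⟩
    have htwos := (hT.isLRRowCounts hlam hν).twos_unique (hT'.isLRRowCounts hlam hν) hlam hν he
      hcorner
    exact hT.eq_of_card_rowCells_two_eq hT' (congrFun htwos)
  exact Finite.card_le_one_iff_subsingleton.2 this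
end

section
/- (Product of two rectangles is multiplicity-free.) If λ = (a^b) and μ = (c^d) are both rectangles, then for every partition ν the Littlewood-Richardson coefficient c^ν_{λ,μ} is at most 1. -/
namespace LR17
/-- Number of rows of `ν` with more than `j` cells. -/
noncomputable def Bv (ν : ℕ → ℕ) (j : ℕ) : ℕ := sInf {m | ν m ≤ j}

/-- The forced value of an LR filling of `ν/(a^b)` with content `(c^d)`. -/
noncomputable def Fv (a d : ℕ) (ν : ℕ → ℕ) (z : ℕ × ℕ) : ℕ :=
  if a ≤ z.2 then z.1 + 1 else d - (Bv ν z.2 - 1 - z.1)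

lemma rectP_le (a b i : ℕ) : rectP a b i ≤ a := by
  unfold rectP; split <;> omega

lemma rectP_anti (a b : ℕ) {i i' : ℕ} (h : i ≤ i') : rectP a b i' ≤ rectP a b i := by
  unfold rectP; split <;> split <;> omega

section

variable {a b c d : ℕ} {ν : ℕ → ℕ} {T : ℕ × ℕ → ℕ}

lemma lt_Bv (hν : IsPartition ν) {m j : ℕ} : m < Bv ν j ↔ j < ν m := by
  obtain ⟨N, hN⟩ := hν.2
  constructor
  · intro h
    by_contra h'
    push_neg at h'
    have h2 : Bv ν j ≤ m := Nat.sInf_le h'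
    omega
  · intro h
    by_contra h'
    push_neg at h'
    have hne : {m | ν m ≤ j}.Nonempty := ⟨N, by simp [hN N le_rfl]⟩
    have h1 : ν (Bv ν j) ≤ j := Nat.sInf_mem hne
    have h2 := hν.1 _ m h'
    omega

lemma skew_finite (hν : IsPartition ν) :
    {z : ℕ × ℕ | InSkew ν (rectP a b) z}.Finite := by
  obtain ⟨N, hN⟩ := hν.2
  apply Set.Finite.subset ((Set.finite_Iio N).prod (Set.finite_Iio (ν 0)))
  rintro ⟨i, j⟩ ⟨h1, h2⟩
  refine ⟨?_, ?_⟩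
  · simp only [Set.mem_Iio]
    by_contra hle
    push_neg at hle
    rw [hN i hle] at h2
    omega
  · simp only [Set.mem_Iio]
    exact lt_of_lt_of_le h2 (hν.1 0 i (Nat.zero_le i))

lemma rb_trans {p q r : ℕ × ℕ} (h1 : ReadBefore p q) (h2 : ReadBefore q r) :
    ReadBefore p r := by
  have h1' : p.1 < q.1 ∨ (p.1 = q.1 ∧ q.2 < p.2) := h1
  have h2' : q.1 < r.1 ∨ (q.1 = r.1 ∧ r.2 < q.2) := h2
  show p.1 < r.1 ∨ (p.1 = r.1 ∧ r.2 < p.2)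
  omega

lemma rb_trich (p q : ℕ × ℕ) : ReadBefore p q ∨ p = q ∨ ReadBefore q p := by
  obtain ⟨p1, p2⟩ := p; obtain ⟨q1, q2⟩ := q
  have h : (p1 < q1 ∨ (p1 = q1 ∧ q2 < p2)) ∨ (p1 = q1 ∧ p2 = q2) ∨
      (q1 < p1 ∨ (q1 = p1 ∧ p2 < q2)) := by omega
  rcases h with h | h | h
  · exact Or.inl h
  · obtain ⟨h1, h2⟩ := h; subst h1; subst h2; exact Or.inr (Or.inl rfl)
  · exact Or.inr (Or.inr h)

/-- Reading rank of a cell. -/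
def rnk (ν : ℕ → ℕ) (z : ℕ × ℕ) : ℕ := z.1 * (ν 0 + 1) + (ν 0 - z.2)

lemma rb_rnk (hν : IsPartition ν) {z w : ℕ × ℕ}
    (hz : InSkew ν (rectP a b) z) (hw : InSkew ν (rectP a b) w)
    (h : ReadBefore z w) : rnk ν z < rnk ν w := by
  have hz2 : z.2 < ν 0 + 1 := by
    have := lt_of_lt_of_le hz.2 (hν.1 0 z.1 (Nat.zero_le _)); omega
  have hw2 : w.2 < ν 0 + 1 := by
    have := lt_of_lt_of_le hw.2 (hν.1 0 w.1 (Nat.zero_le _)); omega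
  have h' : z.1 < w.1 ∨ (z.1 = w.1 ∧ w.2 < z.2) := h
  unfold rnk
  rcases h' with h' | ⟨h1, h2⟩
  · have key : (z.1 + 1) * (ν 0 + 1) ≤ w.1 * (ν 0 + 1) :=
      Nat.mul_le_mul_right _ h'
    have key2 : z.1 * (ν 0 + 1) + (ν 0 + 1) = (z.1 + 1) * (ν 0 + 1) := by ring
    omega
  · rw [h1]; omega

lemma T_le_d (hν : IsPartition ν) (hT : IsLRFilling (rectP a b) (rectP c d) ν T)
    {z : ℕ × ℕ} (hz : InSkew ν (rectP a b) z) : T z ≤ d := by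
  by_contra hgt
  push_neg at hgt
  have h5 := hT.2.2.2.2.1 (T z - 1)
  have h1 : 1 ≤ T z := hT.2.1 z hz
  have he : T z - 1 + 1 = T z := by omega
  rw [he] at h5
  have hpos : 0 < {c | InSkew ν (rectP a b) c ∧ T c = T z}.ncard :=
    (Set.ncard_pos h5.1).mpr ⟨z, hz, rfl⟩
  have h0 : rectP c d (T z - 1) = 0 := by unfold rectP; split <;> omega
  have h2 := h5.2
  omega

lemma entry_le (hν : IsPartition ν) (hT : IsLRFilling (rectP a b) (rectP c d) ν T) :
    ∀ i j : ℕ, InSkew ν (rectP a b) (i, j) → T (i, j) ≤ i + 1 := by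
  intro i
  induction i using Nat.strong_induction_on with
  | _ i ih =>
    intro j hx
    by_contra hgt
    push_neg at hgt
    have h1 : 1 ≤ T (i, j) - 1 := by omega
    have hb := hT.2.2.2.2.2 (i, j) hx (T (i, j) - 1) h1
    have heq : T (i, j) - 1 + 1 = T (i, j) := by omega
    rw [heq] at hb
    have hfinL : {c' | InSkew ν (rectP a b) c' ∧ (ReadBefore c' (i, j) ∨ c' = (i, j)) ∧
        T c' = T (i, j)}.Finite := (skew_finite hν).subset (fun z hz => hz.1)
    have hposL : 0 < {c' | InSkew ν (rectP a b) c' ∧ (ReadBefore c' (i, j) ∨ c' = (i, j)) ∧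
        T c' = T (i, j)}.ncard :=
      (Set.ncard_pos hfinL).mpr ⟨(i, j), hx, Or.inr rfl, rfl⟩
    have hne : {c' | InSkew ν (rectP a b) c' ∧ (ReadBefore c' (i, j) ∨ c' = (i, j)) ∧
        T c' = T (i, j) - 1}.Nonempty := Set.nonempty_of_ncard_ne_zero (by omega)
    obtain ⟨⟨z1, z2⟩, hz, hpre, hval⟩ := hne
    rcases hpre with hpre | heq2
    · have hpre' : z1 < i ∨ (z1 = i ∧ j < z2) := hpre
      rcases hpre' with h | ⟨h1', h2'⟩
      · have := ih z1 h z2 hz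
        omega
      · subst h1'
        have := hT.2.2.1 z1 j z2 hx hz (le_of_lt h2')
        omega
    · have : T (z1, z2) = T (i, j) := by rw [heq2]
      omega

lemma entry_ge (hν : IsPartition ν) (hT : IsLRFilling (rectP a b) (rectP c d) ν T) :
    ∀ i j : ℕ, a ≤ j → InSkew ν (rectP a b) (i, j) → i + 1 ≤ T (i, j) := by
  intro i
  induction i with
  | zero => intro j _ hx; exact hT.2.1 _ hx
  | succ i ih =>
    intro j hj hx
    have hx' : InSkew ν (rectP a b) (i, j) :=
      ⟨le_trans (rectP_le a b i) hj, lt_of_lt_of_le hx.2 (hν.1 i (i + 1) (by omega))⟩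
    have h1 := hT.2.2.2.1 i j hx' hx
    have h2 := ih j hj hx'
    omega

lemma entry_eq_right (hν : IsPartition ν) (hT : IsLRFilling (rectP a b) (rectP c d) ν T)
    (i j : ℕ) (hja : a ≤ j) (hx : InSkew ν (rectP a b) (i, j)) : T (i, j) = i + 1 :=
  le_antisymm (entry_le hν hT i j hx) (entry_ge hν hT i j hja hx)

lemma chain_col (hν : IsPartition ν) (hT : IsLRFilling (rectP a b) (rectP c d) ν T) :
    ∀ k i j : ℕ, InSkew ν (rectP a b) (i, j) → i + k < Bv ν j →
      T (i, j) + k ≤ T (i + k, j) := by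
  intro k
  induction k with
  | zero => intro i j hx _; simp
  | succ k ih =>
    intro i j hx hlt
    have hik : i + k < Bv ν j := by omega
    have h1 := ih i j hx hik
    have hsk : InSkew ν (rectP a b) (i + k, j) :=
      ⟨le_trans (rectP_anti a b (by omega)) hx.1, (lt_Bv hν).mp hik⟩
    have hsk1 : InSkew ν (rectP a b) (i + k + 1, j) :=
      ⟨le_trans (rectP_anti a b (by omega)) hx.1,
        (lt_Bv hν).mp (show i + k + 1 < Bv ν j by omega)⟩
    have h2 := hT.2.2.2.1 (i + k) j hsk hsk1
    show T (i, j) + (k + 1) ≤ T (i + k + 1, j)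
    omega

lemma T_add_le (hν : IsPartition ν) (hT : IsLRFilling (rectP a b) (rectP c d) ν T)
    {i j : ℕ} (hx : InSkew ν (rectP a b) (i, j)) :
    T (i, j) + (Bv ν j - 1 - i) ≤ d := by
  have hiB : i < Bv ν j := (lt_Bv hν).mpr hx.2
  have h1 := chain_col hν hT (Bv ν j - 1 - i) i j hx (by omega)
  have h2 : InSkew ν (rectP a b) (i + (Bv ν j - 1 - i), j) :=
    ⟨le_trans (rectP_anti a b (by omega)) hx.1,
      (lt_Bv hν).mp (show i + (Bv ν j - 1 - i) < Bv ν j by omega)⟩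
  have h3 := T_le_d hν hT h2
  omega

lemma pre_ballot (hν : IsPartition ν) (hT : IsLRFilling (rectP a b) (rectP c d) ν T)
    {x : ℕ × ℕ} {m : ℕ} (hm : 1 ≤ m) :
    {z | InSkew ν (rectP a b) z ∧ ReadBefore z x ∧ T z = m + 1}.ncard ≤
    {z | InSkew ν (rectP a b) z ∧ ReadBefore z x ∧ T z = m}.ncard := by
  by_cases hP : {z | InSkew ν (rectP a b) z ∧ ReadBefore z x}.Nonempty
  · have hfin : {z | InSkew ν (rectP a b) z ∧ ReadBefore z x}.Finite :=
      (skew_finite hν).subset (fun z hz => hz.1)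
    obtain ⟨x0, hx0mem, hx0max⟩ := Finset.exists_max_image hfin.toFinset (rnk ν)
      (by rwa [Set.Finite.toFinset_nonempty])
    rw [Set.Finite.mem_toFinset] at hx0mem
    have hx0 : InSkew ν (rectP a b) x0 := hx0mem.1
    have hkey : ∀ z, (InSkew ν (rectP a b) z ∧ ReadBefore z x) ↔
        (InSkew ν (rectP a b) z ∧ (ReadBefore z x0 ∨ z = x0)) := by
      intro z
      constructor
      · rintro ⟨hz, hzx⟩
        refine ⟨hz, ?_⟩
        rcases rb_trich z x0 with h | h | h
        · exact Or.inl h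
        · exact Or.inr h
        · exfalso
          have h1 := rb_rnk hν hx0 hz h
          have h2 := hx0max z (by rw [Set.Finite.mem_toFinset]; exact ⟨hz, hzx⟩)
          omega
      · rintro ⟨hz, hzx0 | rfl⟩
        · exact ⟨hz, rb_trans hzx0 hx0mem.2⟩
        · exact ⟨hz, hx0mem.2⟩
    have hseq : ∀ v, {z | InSkew ν (rectP a b) z ∧ ReadBefore z x ∧ T z = v} =
        {z | InSkew ν (rectP a b) z ∧ (ReadBefore z x0 ∨ z = x0) ∧ T z = v} := by
      intro v; ext z
      constructor
      · rintro ⟨h1, h2, h3⟩; exact ⟨h1, ((hkey z).mp ⟨h1, h2⟩).2, h3⟩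
      · rintro ⟨h1, h2, h3⟩; exact ⟨h1, ((hkey z).mpr ⟨h1, h2⟩).2, h3⟩
    rw [hseq (m + 1), hseq m]
    exact hT.2.2.2.2.2 x0 hx0 m hm
  · rw [Set.not_nonempty_iff_eq_empty] at hP
    have e1 : {z | InSkew ν (rectP a b) z ∧ ReadBefore z x ∧ T z = m + 1} = ∅ := by
      apply Set.eq_empty_of_subset_empty
      rw [← hP]
      rintro z ⟨h1, h2, _⟩; exact ⟨h1, h2⟩
    have e2 : {z | InSkew ν (rectP a b) z ∧ ReadBefore z x ∧ T z = m} = ∅ := by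
      apply Set.eq_empty_of_subset_empty
      rw [← hP]
      rintro z ⟨h1, h2, _⟩; exact ⟨h1, h2⟩
    rw [e1, e2]

lemma no_deficient (hν : IsPartition ν) (hT : IsLRFilling (rectP a b) (rectP c d) ν T)
    (i j : ℕ) (hx : InSkew ν (rectP a b) (i, j)) (hja : j < a)
    (IH : ∀ z : ℕ × ℕ, InSkew ν (rectP a b) z → ReadBefore (i, j) z → T z = Fv a d ν z) :
    ¬ (T (i, j) + (Bv ν j - 1 - i) < d) := by
  intro hdef
  set s := T (i, j) with hs
  have hiB : i < Bv ν j := (lt_Bv hν).mpr hx.2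
  have hs1 : 1 ≤ s := hT.2.1 _ hx
  have hsd : s < d := by omega
  have hsi : s ≤ i + 1 := entry_le hν hT i j hx
  have ha : 0 < a := by omega
  have hlam0 : rectP a b i = 0 := by
    have h := hx.1
    by_cases hib : i < b
    · exfalso; simp only [rectP, if_pos hib] at h; omega
    · simp only [rectP, if_neg hib]
  have hib : b ≤ i := by
    by_contra hc
    push_neg at hc
    simp only [rectP, if_pos hc] at hlam0
    omega
  set y := i + (d - s) with hy
  have hyB : Bv ν j ≤ y := by omega
  have hvy : ν y ≤ j := by
    by_contra hc
    push_neg at hc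
    have := (lt_Bv hν).mpr hc
    omega
  -- Step A : if s = i+1 then row i+1 has no cells in columns ≥ a
  have hA : s = i + 1 → ν (i + 1) ≤ a := by
    intro hsE
    by_contra hgt
    push_neg at hgt
    have hz1 : InSkew ν (rectP a b) (i + 1, a) := ⟨rectP_le a b (i + 1), hgt⟩
    have hz2 : InSkew ν (rectP a b) (i + 1, j) :=
      ⟨le_trans (rectP_anti a b (by omega)) hx.1, lt_trans hja hgt⟩
    have hrb1 : ReadBefore (i, j) (i + 1, a) := Or.inl (by omega)
    have hrb2 : ReadBefore (i, j) (i + 1, j) := Or.inl (by omega)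
    have hT1 : T (i + 1, a) = i + 2 := by
      rw [IH _ hz1 hrb1]
      show (if a ≤ a then i + 1 + 1 else _) = i + 2
      rw [if_pos le_rfl]
    have hT2 : T (i + 1, j) = d - (Bv ν j - 1 - (i + 1)) := by
      rw [IH _ hz2 hrb2]
      show (if a ≤ j then _ else d - (Bv ν j - 1 - (i + 1))) = _
      rw [if_neg (by omega)]
    have hi1B : i + 1 < Bv ν j := (lt_Bv hν).mpr hz2.2
    have hrow := hT.2.2.1 (i + 1) j a hz2 hz1 (le_of_lt hja)
    omega
  -- counting lemmas
  have hskfin := skew_finite (a := a) (b := b) hν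
  have hcardv : ∀ v : ℕ, 1 ≤ v → v ≤ d →
      {z | InSkew ν (rectP a b) z ∧ T z = v}.ncard = c := by
    intro v h1 h2
    have h5 := hT.2.2.2.2.1 (v - 1)
    have he : v - 1 + 1 = v := by omega
    rw [he] at h5
    rw [h5.2]
    unfold rectP
    rw [if_pos (by omega)]
  have hsplit : ∀ v : ℕ, {z | InSkew ν (rectP a b) z ∧ T z = v} =
      {z | InSkew ν (rectP a b) z ∧ ReadBefore z (i, j) ∧ T z = v} ∪
      {z | InSkew ν (rectP a b) z ∧ (ReadBefore (i, j) z ∨ z = (i, j)) ∧ T z = v} := by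
    intro v
    ext z
    constructor
    · rintro ⟨h1, h2⟩
      rcases rb_trich z (i, j) with h | h | h
      · exact Or.inl ⟨h1, h, h2⟩
      · exact Or.inr ⟨h1, Or.inr h, h2⟩
      · exact Or.inr ⟨h1, Or.inl h, h2⟩
    · rintro (⟨h1, _, h2⟩ | ⟨h1, _, h2⟩) <;> exact ⟨h1, h2⟩
  have hdisj : ∀ v : ℕ,
      Disjoint {z | InSkew ν (rectP a b) z ∧ ReadBefore z (i, j) ∧ T z = v}
        {z | InSkew ν (rectP a b) z ∧ (ReadBefore (i, j) z ∨ z = (i, j)) ∧ T z = v} := by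
    intro v
    rw [Set.disjoint_left]
    rintro ⟨z1, z2⟩ ⟨_, h2, _⟩ ⟨_, h2', _⟩
    have hz2 : z1 < i ∨ (z1 = i ∧ j < z2) := h2
    rcases h2' with h | heqp
    · have : i < z1 ∨ (i = z1 ∧ z2 < j) := h
      omega
    · have h1 : z1 = i := congrArg Prod.fst heqp
      have h2'' : z2 = j := congrArg Prod.snd heqp
      omega
  have htot : ∀ v : ℕ, 1 ≤ v → v ≤ d →
      {z | InSkew ν (rectP a b) z ∧ ReadBefore z (i, j) ∧ T z = v}.ncard +
      {z | InSkew ν (rectP a b) z ∧ (ReadBefore (i, j) z ∨ z = (i, j)) ∧ T z = v}.ncard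
        = c := by
    intro v h1 h2
    have hfin1 : {z | InSkew ν (rectP a b) z ∧ ReadBefore z (i, j) ∧ T z = v}.Finite :=
      hskfin.subset (fun z hz => hz.1)
    have hfin2 : {z | InSkew ν (rectP a b) z ∧ (ReadBefore (i, j) z ∨ z = (i, j)) ∧
        T z = v}.Finite := hskfin.subset (fun z hz => hz.1)
    have h3 : {z | InSkew ν (rectP a b) z ∧ T z = v}.ncard =
        {z | InSkew ν (rectP a b) z ∧ ReadBefore z (i, j) ∧ T z = v}.ncard +
        {z | InSkew ν (rectP a b) z ∧ (ReadBefore (i, j) z ∨ z = (i, j)) ∧ T z = v}.ncard := by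
      rw [hsplit v]
      exact Set.ncard_union_eq (hdisj v) hfin1 hfin2
    rw [← h3]
    exact hcardv v h1 h2
  have hpre := pre_ballot (x := (i, j)) hν hT hs1
  have hL3 : {z | InSkew ν (rectP a b) z ∧ (ReadBefore (i, j) z ∨ z = (i, j)) ∧ T z = s}.ncard ≤
      {z | InSkew ν (rectP a b) z ∧ (ReadBefore (i, j) z ∨ z = (i, j)) ∧ T z = s + 1}.ncard := by
    have t1 := htot s hs1 (by omega)
    have t2 := htot (s + 1) (by omega) (by omega)
    omega
  -- lower bound : ν y + 1 ≤ #Suf(s)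
  have hg : Function.Injective (fun t : ℕ => (Bv ν t - 1 - (d - s), t)) := by
    intro t1 t2 h
    exact congrArg Prod.snd h
  have hL1 : ν y + 1 ≤
      {z | InSkew ν (rectP a b) z ∧ (ReadBefore (i, j) z ∨ z = (i, j)) ∧ T z = s}.ncard := by
    have hsub : insert (i, j) ((fun t : ℕ => (Bv ν t - 1 - (d - s), t)) '' Set.Iio (ν y)) ⊆
        {z | InSkew ν (rectP a b) z ∧ (ReadBefore (i, j) z ∨ z = (i, j)) ∧ T z = s} := by
      intro z hz
      rcases Set.mem_insert_iff.mp hz with rfl | hmem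
      · exact ⟨hx, Or.inr rfl, hs.symm⟩
      · obtain ⟨t, ht, rfl⟩ := hmem
        have htlt : t < ν y := Set.mem_Iio.mp ht
        have hBt : y < Bv ν t := (lt_Bv hν).mpr htlt
        have hri : i ≤ Bv ν t - 1 - (d - s) := by omega
        have htj : t < j := by omega
        have hrB : Bv ν t - 1 - (d - s) < Bv ν t := by omega
        have hsk : InSkew ν (rectP a b) (Bv ν t - 1 - (d - s), t) := by
          refine ⟨?_, (lt_Bv hν).mp hrB⟩
          have hnb : ¬ (Bv ν t - 1 - (d - s) < b) := by omega
          show rectP a b (Bv ν t - 1 - (d - s)) ≤ t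
          simp only [rectP, if_neg hnb]
          omega
        have hrb : ReadBefore (i, j) (Bv ν t - 1 - (d - s), t) := by
          rcases eq_or_lt_of_le hri with he | hl
          · exact Or.inr ⟨he, htj⟩
          · exact Or.inl hl
        have hval : T (Bv ν t - 1 - (d - s), t) = s := by
          rw [IH _ hsk hrb]
          show (if a ≤ t then _ else d - (Bv ν t - 1 - (Bv ν t - 1 - (d - s)))) = s
          rw [if_neg (by omega)]
          omega
        exact ⟨hsk, Or.inl hrb, hval⟩
    have hfinim : ((fun t : ℕ => (Bv ν t - 1 - (d - s), t)) '' Set.Iio (ν y)).Finite :=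
      (Set.finite_Iio _).image _
    have hnotmem : (i, j) ∉ (fun t : ℕ => (Bv ν t - 1 - (d - s), t)) '' Set.Iio (ν y) := by
      rintro ⟨t, ht, heqp⟩
      have h1 : t = j := congrArg Prod.snd heqp
      have h2 := Set.mem_Iio.mp ht
      omega
    have hcard : (insert ((i, j) : ℕ × ℕ)
        ((fun t : ℕ => (Bv ν t - 1 - (d - s), t)) '' Set.Iio (ν y))).ncard = ν y + 1 := by
      rw [Set.ncard_insert_of_notMem hnotmem hfinim,
        Set.ncard_image_of_injective _ hg, ← Finset.coe_range, Set.ncard_coe_finset,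
        Finset.card_range]
    calc ν y + 1 = _ := hcard.symm
      _ ≤ _ := Set.ncard_le_ncard hsub (hskfin.subset (fun z hz => hz.1))
  -- upper bound
  set y' := i + (d - s - 1) with hy'
  set M := max (ν y) (min (ν y') j) with hM
  have hh : Function.Injective (fun t : ℕ => (Bv ν t - (d - s), t)) := by
    intro t1 t2 h
    exact congrArg Prod.snd h
  have hL2 :
      {z | InSkew ν (rectP a b) z ∧ (ReadBefore (i, j) z ∨ z = (i, j)) ∧ T z = s + 1}.ncard
        ≤ M := by
    have hsub2 :
        {z | InSkew ν (rectP a b) z ∧ (ReadBefore (i, j) z ∨ z = (i, j)) ∧ T z = s + 1} ⊆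
        (fun t : ℕ => (Bv ν t - (d - s), t)) '' Set.Iio M := by
      rintro ⟨z1, z2⟩ ⟨hz, hafter, hTz⟩
      rcases hafter with hrb | heqp
      swap
      · exfalso
        have h1 : z1 = i := congrArg Prod.fst heqp
        have h2 : z2 = j := congrArg Prod.snd heqp
        subst h1; subst h2
        omega
      have hrb' : i < z1 ∨ (i = z1 ∧ z2 < j) := hrb
      by_cases hz2a : a ≤ z2
      · exfalso
        have hTz2 : T (z1, z2) = z1 + 1 := by
          rw [IH _ hz hrb]
          show (if a ≤ z2 then z1 + 1 else _) = z1 + 1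
          rw [if_pos hz2a]
        have hz1s : z1 = s := by omega
        rcases hrb' with hlt | ⟨heq1, hlt2⟩
        · have hsE : s = i + 1 := by omega
          have hAa := hA hsE
          have hz1E : z1 = i + 1 := by omega
          subst hz1E
          have h2 : z2 < ν (i + 1) := hz.2
          omega
        · omega
      · push_neg at hz2a
        have hTz2 : T (z1, z2) = d - (Bv ν z2 - 1 - z1) := by
          rw [IH _ hz hrb]
          show (if a ≤ z2 then _ else d - (Bv ν z2 - 1 - z1)) = _
          rw [if_neg (by omega)]
        have hzB : z1 < Bv ν z2 := (lt_Bv hν).mpr hz.2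
        have hBz : Bv ν z2 = z1 + (d - s) := by omega
        refine ⟨z2, ?_, ?_⟩
        · simp only [Set.mem_Iio]
          rcases hrb' with hlt | ⟨heq1, hlt2⟩
          · have h1 : y < Bv ν z2 := by omega
            have h2 : z2 < ν y := (lt_Bv hν).mp h1
            have h3 : ν y ≤ M := le_max_left _ _
            omega
          · have h1 : y' < Bv ν z2 := by omega
            have h2 : z2 < ν y' := (lt_Bv hν).mp h1
            have h3 : min (ν y') j ≤ M := le_max_right _ _
            have h4 : z2 < min (ν y') j := lt_min h2 hlt2
            omega
        · show (Bv ν z2 - (d - s), z2) = (z1, z2)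
          have : Bv ν z2 - (d - s) = z1 := by omega
          rw [this]
    calc {z | InSkew ν (rectP a b) z ∧ (ReadBefore (i, j) z ∨ z = (i, j)) ∧
            T z = s + 1}.ncard
        ≤ ((fun t : ℕ => (Bv ν t - (d - s), t)) '' Set.Iio M).ncard :=
          Set.ncard_le_ncard hsub2 ((Set.finite_Iio _).image _)
      _ = M := by
          rw [Set.ncard_image_of_injective _ hh, ← Finset.coe_range, Set.ncard_coe_finset,
            Finset.card_range]
  have hfinal : ν y + 1 ≤ M := le_trans hL1 (le_trans hL3 hL2)
  have hjy : ν y < j := by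
    rcases le_total (min (ν y') j) (ν y) with h | h
    · rw [hM, max_eq_left h] at hfinal
      omega
    · rw [hM, max_eq_right h] at hfinal
      have := min_le_right (ν y') j
      omega
  have hj1 : 1 ≤ j := by omega
  have hx2 : j < ν i := hx.2
  have hw : InSkew ν (rectP a b) (i, j - 1) :=
    ⟨show rectP a b i ≤ j - 1 by omega, show j - 1 < ν i by omega⟩
  have hwrb : ReadBefore (i, j) (i, j - 1) := Or.inr ⟨rfl, by omega⟩
  have hTw : T (i, j - 1) = d - (Bv ν (j - 1) - 1 - i) := by
    rw [IH _ hw hwrb]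
    show (if a ≤ j - 1 then _ else d - (Bv ν (j - 1) - 1 - i)) = _
    rw [if_neg (by omega)]
  have hwB : i < Bv ν (j - 1) := (lt_Bv hν).mpr (show j - 1 < ν i from hw.2)
  have hrow := hT.2.2.1 i (j - 1) j hw hx (by omega)
  have hge : y < Bv ν (j - 1) := by omega
  have hlast : j - 1 < ν y := (lt_Bv hν).mp hge
  omega

lemma formula_eq (hν : IsPartition ν) (hT : IsLRFilling (rectP a b) (rectP c d) ν T) :
    ∀ x : ℕ × ℕ, InSkew ν (rectP a b) x → T x = Fv a d ν x := by
  have hmain : ∀ n : ℕ, ∀ x : ℕ × ℕ,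
      {z | InSkew ν (rectP a b) z ∧ ReadBefore x z}.ncard < n →
      InSkew ν (rectP a b) x → T x = Fv a d ν x := by
    intro n
    induction n with
    | zero => intro x h hx; exact absurd h (Nat.not_lt_zero _)
    | succ n ih =>
      intro x hn hx
      have IH : ∀ z, InSkew ν (rectP a b) z → ReadBefore x z → T z = Fv a d ν z := by
        intro z hz hxz
        apply ih z ?_ hz
        have hzsub : insert z {w | InSkew ν (rectP a b) w ∧ ReadBefore z w} ⊆
            {w | InSkew ν (rectP a b) w ∧ ReadBefore x w} := by
          intro w hw
          rcases Set.mem_insert_iff.mp hw with rfl | ⟨hw1, hw2⟩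
          · exact ⟨hz, hxz⟩
          · exact ⟨hw1, rb_trans hxz hw2⟩
        have hznot : z ∉ {w | InSkew ν (rectP a b) w ∧ ReadBefore z w} := by
          rintro ⟨_, h2⟩
          have h3 : z.1 < z.1 ∨ (z.1 = z.1 ∧ z.2 < z.2) := h2
          omega
        have hzfin : {w | InSkew ν (rectP a b) w ∧ ReadBefore z w}.Finite :=
          (skew_finite hν).subset fun w hw => hw.1
        have hins := Set.ncard_insert_of_notMem hznot hzfin
        have hle := Set.ncard_le_ncard hzsub ((skew_finite hν).subset fun w hw => hw.1)
        omega
      obtain ⟨i, j⟩ := x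
      by_cases hja : a ≤ j
      · show T (i, j) = if a ≤ j then i + 1 else d - (Bv ν j - 1 - i)
        rw [if_pos hja]
        exact entry_eq_right hν hT i j hja hx
      · push_neg at hja
        show T (i, j) = if a ≤ j then i + 1 else d - (Bv ν j - 1 - i)
        rw [if_neg (by omega)]
        have h1 := T_add_le hν hT hx
        have h2 := no_deficient hν hT i j hx hja IH
        have hiB : i < Bv ν j := (lt_Bv hν).mpr hx.2
        omega
  intro x hx
  exact hmain ({z | InSkew ν (rectP a b) z ∧ ReadBefore x z}.ncard + 1) x (by omega) hx

end

end LR17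

/-- The product of two rectangles is multiplicity-free: if `λ = (a^b)` and
`μ = (c^d)` then every LR coefficient `c^ν_{λ,μ}` is at most 1. -/
theorem stmt17 (a b c d : ℕ) :
    ∀ ν : ℕ → ℕ, IsPartition ν → lrCoeff (rectP a b) (rectP c d) ν ≤ 1 := by
  intro ν hν
  have hsub : Subsingleton {T : ℕ × ℕ → ℕ // IsLRFilling (rectP a b) (rectP c d) ν T} := by
    constructor
    rintro ⟨T, hT⟩ ⟨T', hT'⟩
    apply Subtype.ext
    show T = T'
    funext z
    by_cases hz : InSkew ν (rectP a b) z
    · rw [LR17.formula_eq hν hT z hz, LR17.formula_eq hν hT' z hz]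
    · rw [hT.1 z hz, hT'.1 z hz]
  unfold lrCoeff
  rcases isEmpty_or_nonempty {T : ℕ × ℕ → ℕ // IsLRFilling (rectP a b) (rectP c d) ν T}
    with h | h
  · simp [Nat.card_of_isEmpty]
  · rw [Nat.card_eq_one_iff_unique.mpr ⟨hsub, h⟩]
end

section
/- Let (λ, μ, ℓ×k) be a basic Richardson quadruple where λ and μ are both fat hooks, with corners A (lowest-leftmost) and B (highest-rightmost) of λ, and corners X (lowest-leftmost) and Y (highest-rightmost) of rotate(μ). If the quadruple admits no inductive Stembridge demolition, neither λ nor μ is a hook, and neither (λ,μ,ℓ×k) nor its conjugate (λ',μ',k×ℓ) is well-ordered, then a contradiction arises; equivalently, for a basic Richardson quadruple with λ and μ fat hooks that are not hooks and with no inductive Stembridge demolition, (λ,μ,ℓ×k) or (λ',μ',k×ℓ) satisfies row(A) < row(X) and row(B) < row(Y). -/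
/-- `f` is a hook `(b, 1^a)`. -/
def IsHook (f : ℕ → ℕ) : Prop := ∃ b a, 1 ≤ b ∧ f = hookP b a

/-- Delete the part with (0-based) index `p` from `f`. -/
def delPart (f : ℕ → ℕ) (p : ℕ) : ℕ → ℕ := fun i => if i < p then f i else f (i + 1)

/-- Delete column `j` (0-indexed) of the rectangle from `λ` (placed top-left). -/
def delCol (f : ℕ → ℕ) (j : ℕ) : ℕ → ℕ := fun i => if j < f i then f i - 1 else f i

/-- Delete column `j` (0-indexed) of the `_ × k` rectangle from `μ` (placed
rotated at the bottom-right). -/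
def delColMu (k : ℕ) (f : ℕ → ℕ) (j : ℕ) : ℕ → ℕ :=
  fun i => if k - j ≤ f i then f i - 1 else f i

/-- The conjugate (transpose) partition. -/
noncomputable def conjP (f : ℕ → ℕ) : ℕ → ℕ := fun j => {i | j < f i}.ncard

/-- For fat hooks `λ, μ` in `l × k`: the 1-indexed rows of the lowest/leftmost
corner `A` of `λ`, the highest/rightmost corner `B` of `λ`, the lowest corner `X`
of `rotate(μ)` (row `l + 1 - #{max parts of μ}`) and the highest corner `Y` of
`rotate(μ)` (row `l + 1 - ℓ(μ)`) satisfy `row(A) < row(X)` and `row(B) < row(Y)`. -/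
noncomputable def WellOrdered (lam mu : ℕ → ℕ) (l : ℕ) : Prop :=
  numParts lam < l + 1 - {i | mu i = mu 0}.ncard ∧
  {i | lam i = lam 0}.ncard < l + 1 - numParts mu

/-- `(λ, μ, l × k)` admits an inductive Stembridge demolition: a row or column of
`l × k` containing boxes of exactly one of `λ`, `rotate(μ)` can be removed so that
the result is again a basic Richardson quadruple with both shapes having at least
two distinct part sizes. -/
noncomputable def HasIndStembridge (lam mu : ℕ → ℕ) (l k : ℕ) : Prop :=
  (∃ i₀, i₀ < l ∧ Xor' (lam i₀ ≠ 0) (mu (l - 1 - i₀) ≠ 0) ∧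
    BasicRQ (delPart lam i₀) (delPart mu (l - 1 - i₀)) (l - 1) k ∧
    2 ≤ numPartSizes (delPart lam i₀) ∧
    2 ≤ numPartSizes (delPart mu (l - 1 - i₀))) ∨
  (∃ j₀, j₀ < k ∧ Xor' (j₀ < lam 0) (k - mu 0 ≤ j₀) ∧
    BasicRQ (delCol lam j₀) (delColMu k mu j₀) l (k - 1) ∧
    2 ≤ numPartSizes (delCol lam j₀) ∧
    2 ≤ numPartSizes (delColMu k mu j₀))

def NF (b d p q : ℕ) : ℕ → ℕ := fun i => if i < p then b else if i < p + q then d else 0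
def covNF (b d p q : ℕ) : ℕ → ℕ := fun j => if j < d then p + q else if j < b then p else 0

lemma NF_cov_iff (b d p q : ℕ) (hdb : d ≤ b) (i j : ℕ) :
    j < NF b d p q i ↔ i < covNF b d p q j := by
  simp only [NF, covNF]; split_ifs <;> omega

lemma NF_isPartition (b d p q : ℕ) (hdb : d ≤ b) : IsPartition (NF b d p q) := by
  refine ⟨fun i j hij => ?_, p + q, fun i hi => ?_⟩ <;>
    · simp only [NF]; split_ifs <;> omega

lemma NF_le (b d p q : ℕ) (hdb : d ≤ b) (i : ℕ) : NF b d p q i ≤ b := by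
  simp only [NF]; split_ifs <;> omega

lemma ncard_setOf_lt (n : ℕ) : {i : ℕ | i < n}.ncard = n := by
  rw [show {i : ℕ | i < n} = ↑(Finset.Iio n) by ext; simp, Set.ncard_coe_finset,
    Nat.card_Iio]

lemma NF_numParts (b d p q : ℕ) (hd : 1 ≤ d) (hdb : d ≤ b) :
    numParts (NF b d p q) = p + q := by
  unfold numParts
  rw [show {i | NF b d p q i ≠ 0} = {i : ℕ | i < p + q} by
    ext i; simp only [Set.mem_setOf_eq, NF]; split_ifs <;> omega, ncard_setOf_lt]

lemma NF_numMax (b d p q : ℕ) (hd : 1 ≤ d) (hdb : d < b) (hp : 1 ≤ p) :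
    {i | NF b d p q i = NF b d p q 0}.ncard = p := by
  rw [show {i | NF b d p q i = NF b d p q 0} = {i : ℕ | i < p} by
    ext i; simp only [Set.mem_setOf_eq, NF]; split_ifs <;> omega, ncard_setOf_lt]

lemma NF_numPartSizes (b d p q : ℕ) (hd : 1 ≤ d) (hdb : d < b) (hp : 1 ≤ p) (hq : 1 ≤ q) :
    numPartSizes (NF b d p q) = 2 := by
  unfold numPartSizes
  rw [show {n | n ≠ 0 ∧ ∃ i, NF b d p q i = n} = {b, d} by
    ext n
    simp only [Set.mem_setOf_eq, Set.mem_insert_iff, Set.mem_singleton_iff]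
    constructor
    · rintro ⟨hn, i, hi⟩; simp only [NF] at hi; split_ifs at hi <;> omega
    · rintro (rfl | rfl)
      · exact ⟨by omega, 0, by simp only [NF]; split_ifs <;> omega⟩
      · exact ⟨by omega, p, by simp only [NF]; split_ifs <;> omega⟩]
  rw [Set.ncard_pair (by omega)]

lemma conjP_NF (b d p q : ℕ) (hdb : d ≤ b) :
    conjP (NF b d p q) = NF (p + q) p d (b - d) := by
  funext j
  unfold conjP
  rw [show {i | j < NF b d p q i} = {i : ℕ | i < covNF b d p q j} by
    ext i; exact NF_cov_iff b d p q hdb i j, ncard_setOf_lt]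
  simp only [covNF, NF]; split_ifs <;> omega

lemma fatHook_exists (f : ℕ → ℕ) (hpart : IsPartition f) (h2 : numPartSizes f = 2) :
    ∃ b d p q, 1 ≤ d ∧ d < b ∧ 1 ≤ p ∧ 1 ≤ q ∧ f = NF b d p q := by
  obtain ⟨hmono, N, hN⟩ := hpart
  obtain ⟨x, y, hxy, hS⟩ := Set.ncard_eq_two.mp h2
  obtain ⟨b, d, hdb0, hSbd⟩ : ∃ b d, d < b ∧ {n | n ≠ 0 ∧ ∃ i, f i = n} = {b, d} := by
    rcases lt_trichotomy x y with h | h | h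
    · exact ⟨y, x, h, by rw [hS]; exact Set.pair_comm x y⟩
    · exact absurd h hxy
    · exact ⟨x, y, h, hS⟩
  have hmem : ∀ i, f i = 0 ∨ f i = b ∨ f i = d := by
    intro i
    by_cases h : f i = 0
    · exact Or.inl h
    · have : f i ∈ {n | n ≠ 0 ∧ ∃ i, f i = n} := ⟨h, i, rfl⟩
      rw [hSbd] at this
      exact Or.inr this
  have hbS : b ∈ {n | n ≠ 0 ∧ ∃ i, f i = n} := by rw [hSbd]; left; rfl
  have hdS : d ∈ {n | n ≠ 0 ∧ ∃ i, f i = n} := by rw [hSbd]; right; rfl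
  obtain ⟨hb0, ib, hib⟩ := hbS
  obtain ⟨hd0, id, hid⟩ := hdS
  have hdb : d < b := hdb0
  have hf0 : f 0 = b := by
    have h1 : b ≤ f 0 := hib ▸ hmono 0 ib (Nat.zero_le _)
    rcases hmem 0 with h | h | h <;> omega
  have hex1 : ∃ i, f i < b := ⟨N, by rw [hN N le_rfl]; omega⟩
  set p := Nat.find hex1 with hp
  have hps : f p < b := Nat.find_spec hex1
  have hpm : ∀ i, i < p → b ≤ f i := fun i hi => by
    have := Nat.find_min hex1 hi; omega
  have hp1 : 1 ≤ p := by
    rcases Nat.eq_zero_or_pos p with h | h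
    · rw [h] at hps; omega
    · exact h
  have hex2 : ∃ i, f i < d := ⟨N, by rw [hN N le_rfl]; omega⟩
  set t := Nat.find hex2 with ht
  have hts : f t < d := Nat.find_spec hex2
  have htm : ∀ i, i < t → d ≤ f i := fun i hi => by
    have := Nat.find_min hex2 hi; omega
  have hft0 : f t = 0 := by rcases hmem t with h | h | h <;> omega
  have hidt : id < t := by
    by_contra h
    have := hmono t id (by omega)
    omega
  have hpt : p < t := by
    have : ¬ id < p := fun h => by have := hpm id h; omega
    omega
  refine ⟨b, d, p, t - p, by omega, hdb, hp1, by omega, funext fun i => ?_⟩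
  simp only [NF]
  split_ifs with h1 h2
  · have h3 := hpm i h1
    rcases hmem i with h | h | h <;> omega
  · have h4 : f i ≤ f p := hmono p i (by omega)
    have h5 := htm i (by omega)
    have h6 := htm p (by omega)
    have h7 : f p = d := by rcases hmem p with h | h | h <;> omega
    rcases hmem i with h | h | h <;> omega
  · have := hmono t i (by omega)
    omega

lemma basicRQ_NF (b d p q e f r s l k : ℕ) (hd : 1 ≤ d) (hdb : d ≤ b)
    (hf : 1 ≤ f) (hfe : f ≤ e) (hl : 1 ≤ l) (hbK : b ≤ k) (heK : e ≤ k)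
    (hlht : p + q ≤ l) (hmht : r + s ≤ l)
    (hrows : ∀ i, i < l → NF b d p q i + NF e f r s (l - 1 - i) ≤ k - 1)
    (hcols : ∀ j, j < k → covNF b d p q j + covNF e f r s (k - 1 - j) ≤ l - 1) :
    BasicRQ (NF b d p q) (NF e f r s) l k := by
  have hk : 1 ≤ k := by omega
  refine ⟨⟨NF_isPartition b d p q hdb, le_trans (NF_le b d p q hdb 0) hbK,
      fun i hi => by simp only [NF]; split_ifs <;> omega⟩,
    ⟨NF_isPartition e f r s hfe, le_trans (NF_le e f r s hfe 0) heK,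
      fun i hi => by simp only [NF]; split_ifs <;> omega⟩, ?_, ?_, ?_⟩
  · rintro c h1 h2 ⟨hA, hB⟩
    simp only [InLam, InRot] at hA hB
    have h3 := hrows c.1 h1
    have h4 := NF_le e f r s hfe (l - 1 - c.1)
    omega
  · intro j hj hfull
    have hsum := hcols j hj
    have hcovm : 0 ≤ covNF e f r s (k - 1 - j) := Nat.zero_le _
    have hil : covNF b d p q j < l := by omega
    rcases hfull (covNF b d p q j) hil with h | h
    · simp only [InLam] at h
      rw [NF_cov_iff b d p q hdb] at h; omega
    · simp only [InRot] at h
      have h5 : ¬ (l - 1 - covNF b d p q j < covNF e f r s (k - 1 - j)) := by omega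
      rw [← NF_cov_iff e f r s hfe] at h5
      have h6 := NF_le e f r s hfe (l - 1 - covNF b d p q j)
      omega
  · intro i hi hfull
    have h3 := hrows i hi
    have h4 := NF_le e f r s hfe (l - 1 - i)
    rcases hfull (NF b d p q i) (by omega) with h | h
    · simp only [InLam] at h; omega
    · simp only [InRot] at h; omega

lemma rows_of_basic (b d p q e f r s l k : ℕ) (hdb : d ≤ b) (hfe : f ≤ e) (hr : 1 ≤ r)
    (hB : BasicRQ (NF b d p q) (NF e f r s) l k) :
    ∀ i, i < l → NF b d p q i + NF e f r s (l - 1 - i) ≤ k - 1 := by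
  intro i hi
  obtain ⟨_, ⟨_, hm0, _⟩, _, _, hrow⟩ := hB
  have h1 := hrow i hi
  rw [FullRow] at h1
  push_neg at h1
  obtain ⟨j, hj, h2⟩ := h1
  simp only [InLam, InRot] at h2
  obtain ⟨h2a, h2b⟩ := h2
  have h4 : NF e f r s (l - 1 - i) ≤ e := NF_le e f r s hfe _
  have h5 : e ≤ k := by simp only [NF] at hm0; split_ifs at hm0 <;> omega
  omega

lemma cols_of_basic (b d p q e f r s l k : ℕ) (hdb : d ≤ b) (hfe : f ≤ e)
    (hB : BasicRQ (NF b d p q) (NF e f r s) l k) :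
    ∀ j, j < k → covNF b d p q j + covNF e f r s (k - 1 - j) ≤ l - 1 := by
  intro j hj
  obtain ⟨_, _, _, hcol, _⟩ := hB
  have h1 := hcol j hj
  rw [FullCol] at h1
  push_neg at h1
  obtain ⟨i, hi, h2⟩ := h1
  simp only [InLam, InRot] at h2
  obtain ⟨h2a, h2b⟩ := h2
  have h3 : covNF b d p q j ≤ i := by
    have := (NF_cov_iff b d p q hdb i j).not
    omega
  have h4 : covNF e f r s (k - 1 - j) ≤ l - 1 - i := by
    have h5 : ¬ (k - 1 - j < NF e f r s (l - 1 - i)) := by omega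
    rw [NF_cov_iff e f r s hfe] at h5
    omega
  omega


set_option maxHeartbeats 2000000 in
/-- For a basic Richardson quadruple whose shapes are fat hooks, not hooks, with
no inductive Stembridge demolition available, the quadruple or its conjugate is
well-ordered. -/
theorem stmt18 (lam mu : ℕ → ℕ) (l k : ℕ)
    (hbasic : BasicRQ lam mu l k)
    (hfatl : numPartSizes lam = 2) (hfatm : numPartSizes mu = 2)
    (hnhl : ¬ IsHook lam) (hnhm : ¬ IsHook mu)
    (hnost : ¬ HasIndStembridge lam mu l k) :
    WellOrdered lam mu l ∨ WellOrdered (conjP lam) (conjP mu) k := by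
  obtain ⟨b, d, p, q, hd1, hdb, hp1, hq1, hlamNF⟩ :=
    fatHook_exists lam hbasic.1.1 hfatl
  obtain ⟨e, f, r, s, hf1, hfe, hr1, hs1, hmuNF⟩ :=
    fatHook_exists mu hbasic.2.1.1 hfatm
  subst hlamNF hmuNF
  have hdb' : d ≤ b := le_of_lt hdb
  have hfe' : f ≤ e := le_of_lt hfe
  have hR := rows_of_basic b d p q e f r s l k hdb' hfe' hr1 hbasic
  have hC := cols_of_basic b d p q e f r s l k hdb' hfe' hbasic
  obtain ⟨⟨hlpart, hl0, hlht⟩, ⟨hmpart, hm0, hmht⟩, hdisj, hcolF, hrowF⟩ := hbasic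
  have hbK : b ≤ k := by simp only [NF] at hl0; split_ifs at hl0 <;> omega
  have heK : e ≤ k := by simp only [NF] at hm0; split_ifs at hm0 <;> omega
  have hl1 : 1 ≤ l := by
    by_contra h
    have := hlht 0 (by omega)
    simp only [NF] at this; split_ifs at this <;> omega
  have hk1 : 1 ≤ k := by omega
  have hLl : p + q ≤ l - 1 := by
    have := hC 0 (by omega)
    simp only [covNF] at this; split_ifs at this <;> omega
  have hMl : r + s ≤ l - 1 := by
    have := hC (k - 1) (by omega)
    simp only [covNF] at this; split_ifs at this <;> omega
  have hbk : b ≤ k - 1 := by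
    have := hR 0 (by omega)
    simp only [NF] at this; split_ifs at this <;> omega
  have hek : e ≤ k - 1 := by
    have := hR (l - 1) (by omega)
    simp only [NF] at this; split_ifs at this <;> omega
  -- four geometric implications
  have hIb : b = k - 1 → p + (r + s) ≤ l := by
    intro hb
    have h := hR (p - 1) (by omega)
    simp only [NF] at h; split_ifs at h <;> omega
  have hIe : e = k - 1 → (p + q) + r ≤ l := by
    intro he
    have h := hR (l - r) (by omega)
    simp only [NF] at h; split_ifs at h <;> omega
  have hIM : r + s = l - 1 → b + f ≤ k := by
    intro hM
    have h := hC (k - f) (by omega)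
    simp only [covNF] at h; split_ifs at h <;> omega
  have hIL : p + q = l - 1 → d + e ≤ k := by
    intro hL
    have h := hC (d - 1) (by omega)
    simp only [covNF] at h; split_ifs at h <;> omega
  -- four demolition consequences
  have hD1 : p = 1 ∨ r + s = l - 1 := by
    by_contra hcon
    push_neg at hcon
    obtain ⟨hp2, hM2⟩ := hcon
    have hp2' : 2 ≤ p := by omega
    have hM2' : r + s ≤ l - 2 := by omega
    apply hnost
    left
    have e1 : delPart (NF b d p q) 0 = NF b d (p - 1) q := by
      funext i; simp only [delPart, NF]; split_ifs <;> omega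
    have e2 : delPart (NF e f r s) (l - 1 - 0) = NF e f r s := by
      funext i; simp only [delPart, NF]; split_ifs <;> omega
    refine ⟨0, by omega, Or.inl ⟨?_, ?_⟩, ?_, ?_, ?_⟩
    · simp only [NF]; split_ifs <;> omega
    · simp only [ne_eq, not_not, NF]; split_ifs <;> omega
    · rw [e1, e2]
      refine basicRQ_NF b d (p - 1) q e f r s (l - 1) k hd1 hdb' hf1 hfe'
        (by omega) hbK heK (by omega) (by omega) ?_ ?_
      · intro i hi
        have h2 : NF b d (p - 1) q i = NF b d p q (i + 1) := by
          simp only [NF]; split_ifs <;> omega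
        have h3 : l - 1 - 1 - i = l - 1 - (i + 1) := by omega
        rw [h2, h3]
        exact hR (i + 1) (by omega)
      · intro j hj
        have h := hC j hj
        simp only [covNF] at h ⊢
        split_ifs at h ⊢ <;> omega
    · rw [e1, NF_numPartSizes b d (p - 1) q hd1 hdb (by omega) hq1]
    · rw [e2, hfatm]
  have hD2 : r = 1 ∨ p + q = l - 1 := by
    by_contra hcon
    push_neg at hcon
    obtain ⟨hr2, hL2⟩ := hcon
    have hr2' : 2 ≤ r := by omega
    have hL2' : p + q ≤ l - 2 := by omega
    apply hnost
    left
    have e1 : delPart (NF b d p q) (l - 1) = NF b d p q := by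
      funext i; simp only [delPart, NF]; split_ifs <;> omega
    have e2 : delPart (NF e f r s) (l - 1 - (l - 1)) = NF e f (r - 1) s := by
      funext i; simp only [delPart, NF]; split_ifs <;> omega
    refine ⟨l - 1, by omega, Or.inr ⟨?_, ?_⟩, ?_, ?_, ?_⟩
    · simp only [NF]; split_ifs <;> omega
    · simp only [ne_eq, not_not, NF]; split_ifs <;> omega
    · rw [e1, e2]
      refine basicRQ_NF b d p q e f (r - 1) s (l - 1) k hd1 hdb' hf1 hfe'
        (by omega) hbK heK (by omega) (by omega) ?_ ?_
      · intro i hi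
        have h2 : NF e f (r - 1) s (l - 1 - 1 - i) = NF e f r s (l - 1 - i) := by
          simp only [NF]; split_ifs <;> omega
        rw [h2]
        exact hR i (by omega)
      · intro j hj
        have h := hC j hj
        simp only [covNF] at h ⊢
        split_ifs at h ⊢ <;> omega
    · rw [e1, hfatl]
    · rw [e2, NF_numPartSizes e f (r - 1) s hf1 hfe (by omega) hs1]
  have hD3 : f = 1 ∨ b = k - 1 := by
    by_contra hcon
    push_neg at hcon
    obtain ⟨hf2, hb2⟩ := hcon
    have hf2' : 2 ≤ f := by omega
    have hb2' : b ≤ k - 2 := by omega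
    apply hnost
    right
    have e1 : delCol (NF b d p q) (k - 1) = NF b d p q := by
      funext i; simp only [delCol, NF]; split_ifs <;> omega
    have e2 : delColMu k (NF e f r s) (k - 1) = NF (e - 1) (f - 1) r s := by
      funext i; simp only [delColMu, NF]; split_ifs <;> omega
    refine ⟨k - 1, by omega, Or.inr ⟨?_, ?_⟩, ?_, ?_, ?_⟩
    · simp only [NF]; split_ifs <;> omega
    · simp only [not_lt, NF]; split_ifs <;> omega
    · rw [e1, e2]
      refine basicRQ_NF b d p q (e - 1) (f - 1) r s l (k - 1) hd1 hdb'
        (by omega) (by omega) (by omega) (by omega) (by omega) (by omega) (by omega) ?_ ?_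
      · intro i hi
        have h := hR i hi
        simp only [NF] at h ⊢
        split_ifs at h ⊢ <;> omega
      · intro j hj
        have h := hC j (by omega)
        simp only [covNF] at h ⊢
        split_ifs at h ⊢ <;> omega
    · rw [e1, hfatl]
    · rw [e2, NF_numPartSizes (e - 1) (f - 1) r s (by omega) (by omega) hr1 hs1]
  have hD4 : d = 1 ∨ e = k - 1 := by
    by_contra hcon
    push_neg at hcon
    obtain ⟨hd2, he2⟩ := hcon
    have hd2' : 2 ≤ d := by omega
    have he2' : e ≤ k - 2 := by omega
    apply hnost
    right
    have e1 : delCol (NF b d p q) 0 = NF (b - 1) (d - 1) p q := by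
      funext i; simp only [delCol, NF]; split_ifs <;> omega
    have e2 : delColMu k (NF e f r s) 0 = NF e f r s := by
      funext i; simp only [delColMu, NF]; split_ifs <;> omega
    refine ⟨0, by omega, Or.inl ⟨?_, ?_⟩, ?_, ?_, ?_⟩
    · simp only [NF]; split_ifs <;> omega
    · simp only [not_le, NF]; split_ifs <;> omega
    · rw [e1, e2]
      refine basicRQ_NF (b - 1) (d - 1) p q e f r s l (k - 1) (by omega) (by omega)
        hf1 hfe' (by omega) (by omega) (by omega) (by omega) (by omega) ?_ ?_
      · intro i hi
        have h := hR i hi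
        simp only [NF] at h ⊢
        split_ifs at h ⊢ <;> omega
      · intro j hj
        have h := hC (j + 1) (by omega)
        simp only [covNF] at h ⊢
        split_ifs at h ⊢ <;> omega
    · rw [e1, NF_numPartSizes (b - 1) (d - 1) p q (by omega) (by omega) hp1 hq1]
    · rw [e2, hfatm]
  have hD1' : p = 1 ∨ b + f ≤ k := hD1.imp id hIM
  have hD2' : r = 1 ∨ d + e ≤ k := hD2.imp id hIL
  have hD3' : f = 1 ∨ p + (r + s) ≤ l := hD3.imp id hIb
  have hD4' : d = 1 ∨ (p + q) + r ≤ l := hD4.imp id hIe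
  have hnl : ¬(p = 1 ∧ d = 1) := by
    rintro ⟨hp, hd'⟩
    exact hnhl ⟨b, q, by omega, funext fun i => by
      simp only [NF, hookP]; split_ifs <;> omega⟩
  have hnm : ¬(r = 1 ∧ f = 1) := by
    rintro ⟨hr', hf'⟩
    exact hnhm ⟨e, s, by omega, funext fun i => by
      simp only [NF, hookP]; split_ifs <;> omega⟩
  have hW1 : (p + q) + r ≤ l → p + (r + s) ≤ l →
      WellOrdered (NF b d p q) (NF e f r s) l := by
    intro h1 h2
    unfold WellOrdered
    rw [NF_numParts b d p q hd1 hdb', NF_numParts e f r s hf1 hfe',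
      NF_numMax e f r s hf1 hfe hr1, NF_numMax b d p q hd1 hdb hp1]
    constructor <;> omega
  have hW2 : b + f ≤ k → d + e ≤ k →
      WellOrdered (conjP (NF b d p q)) (conjP (NF e f r s)) k := by
    intro h1 h2
    rw [conjP_NF b d p q hdb', conjP_NF e f r s hfe']
    unfold WellOrdered
    rw [NF_numParts (p + q) p d (b - d) hp1 (by omega),
      NF_numParts (r + s) r f (e - f) hr1 (by omega),
      NF_numMax (r + s) r f (e - f) hr1 (by omega) hf1,
      NF_numMax (p + q) p d (b - d) hp1 (by omega) hd1]
    constructor <;> omega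
  by_cases hp : p = 1 <;> by_cases hr : r = 1
  · have hd2 : d ≠ 1 := fun h => hnl ⟨hp, h⟩
    have hf2 : f ≠ 1 := fun h => hnm ⟨hr, h⟩
    exact Or.inl (hW1 (hD4'.resolve_left hd2) (hD3'.resolve_left hf2))
  · have hd2 : d ≠ 1 := fun h => hnl ⟨hp, h⟩
    have h1 := hD4'.resolve_left hd2
    have h2 := hD2'.resolve_left hr
    rcases hD3' with hf' | h3
    · exact Or.inr (hW2 (by omega) h2)
    · exact Or.inl (hW1 h1 h3)
  · have hf2 : f ≠ 1 := fun h => hnm ⟨hr, h⟩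
    have h1 := hD3'.resolve_left hf2
    have h2 := hD1'.resolve_left hp
    rcases hD4' with hd' | h3
    · exact Or.inr (hW2 h2 (by omega))
    · exact Or.inl (hW1 h3 h1)
  · exact Or.inr (hW2 (hD1'.resolve_left hp) (hD2'.resolve_left hr))
end
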